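/- Let X ∈ ℝ^{n×n}, w, v ∈ ℝⁿ, τ > 0, and let X̃ be the (n+1)×(n+1) block matrix with upper-left block X, last column [w; 0], and zero last row. Then the first n components of exp(τ X̃) applied to the vector [v; 1] equal e^{τX} v + τ φ₁(τX) w. -/

import Mathlib

open MeasureTheory intervalIntegral

attribute [local instance] Matrix.linftyOpNormedAddCommGroup Matrix.linftyOpNormedRing
  Matrix.linftyOpNormedAlgebra

/-- `φ₁(X) = ∫₀¹ e^{(1-θ)X} dθ` for a real square matrix `X`. -/
noncomputable def phi1R {n : ℕ} (X : Matrix (Fin n) (Fin n) ℝ) : Matrix (Fin n) (Fin n) ℝ :=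
  ∫ θ in (0:ℝ)..1, NormedSpace.exp ((1 - θ) • X)

/-!
The powers of `X̃` stay block upper triangular: `X̃ ^ (k + 1)` has diagonal blocks `X ^ (k + 1)`
and `0` and top-right block `X ^ k w`. Summing the exponential series blockwise, the top-right
block of `exp X̃` is `∑ₖ X ^ k w / (k + 1)!`, and this is `φ₁(X) w`: integrating the exponential
series of `e^{θX}` termwise over `[0, 1]` turns `θ ^ k / k!` into `1 / (k + 1)!`.
-/

open Nat Matrix

theorem HasSum.matrix_fromBlocks {X l m n o R : Type*} [AddCommMonoid R] [TopologicalSpace R]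
    {fA : X → Matrix n l R} {fB : X → Matrix n m R} {fC : X → Matrix o l R}
    {fD : X → Matrix o m R} {A : Matrix n l R} {B : Matrix n m R} {C : Matrix o l R}
    {D : Matrix o m R} (hA : HasSum fA A) (hB : HasSum fB B) (hC : HasSum fC C)
    (hD : HasSum fD D) :
    HasSum (fun x => fromBlocks (fA x) (fB x) (fC x) (fD x)) (fromBlocks A B C D) := by
  refine Pi.hasSum.2 fun i => Pi.hasSum.2 fun j => ?_
  rcases i with i | i <;> rcases j with j | j
  · exact Pi.hasSum.1 (Pi.hasSum.1 hA i) j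
  · exact Pi.hasSum.1 (Pi.hasSum.1 hB i) j
  · exact Pi.hasSum.1 (Pi.hasSum.1 hC i) j
  · exact Pi.hasSum.1 (Pi.hasSum.1 hD i) j

theorem HasSum.matrix_mul_right {X l m n R : Type*} [Fintype m] [NonUnitalNonAssocSemiring R]
    [TopologicalSpace R] [IsTopologicalSemiring R] {f : X → Matrix l m R} {a : Matrix l m R}
    (hf : HasSum f a) (B : Matrix m n R) :
    HasSum (fun x => f x * B) (a * B) :=
  hf.map (addMonoidHomMulRight B) (continuous_id.matrix_mul continuous_const)

theorem hasSum_integral_exp_one_sub_smul {𝔸 : Type*} [NormedRing 𝔸] [NormedAlgebra ℝ 𝔸]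
    [CompleteSpace 𝔸] (a : 𝔸) :
    HasSum (fun k => ((k + 1)! : ℝ)⁻¹ • a ^ k)
      (∫ θ in (0:ℝ)..1, NormedSpace.exp ((1 - θ) • a)) := by
  have hflip : (∫ θ in (0:ℝ)..1, NormedSpace.exp ((1 - θ) • a)) =
      ∫ θ in (0:ℝ)..1, NormedSpace.exp (θ • a) := by
    simpa using integral_comp_sub_left (a := 0) (b := 1) (fun θ : ℝ => NormedSpace.exp (θ • a)) 1
  have hterm (k : ℕ) : (∫ θ in (0:ℝ)..1, θ ^ k • ((k ! : ℝ)⁻¹ • a ^ k)) =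
      ((k + 1)! : ℝ)⁻¹ • a ^ k := by
    rw [intervalIntegral.integral_smul_const, integral_pow, smul_smul, factorial_succ]
    push_cast
    field_simp
    simp
  have htermwise := intervalIntegral.hasSum_integral_of_dominated_convergence
    (F := fun k θ => θ ^ k • ((k ! : ℝ)⁻¹ • a ^ k)) (f := fun θ => NormedSpace.exp (θ • a))
    (a := 0) (b := 1) (μ := volume) (fun k _ => ‖(k ! : ℝ)⁻¹ • a ^ k‖)
    (fun k => (by fun_prop : Continuous fun θ : ℝ => θ ^ k • ((k ! : ℝ)⁻¹ • a ^ k)).aestronglyMeasurable)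
    (fun k => Filter.Eventually.of_forall fun θ hθ => by
      rw [Set.uIoc_of_le zero_le_one] at hθ
      rw [norm_smul, norm_pow, Real.norm_of_nonneg hθ.1.le]
      exact mul_le_of_le_one_left (norm_nonneg _) (pow_le_one₀ hθ.1.le hθ.2))
    (Filter.Eventually.of_forall fun _ _ => NormedSpace.norm_expSeries_summable' a)
    intervalIntegrable_const
    (Filter.Eventually.of_forall fun θ _ => by
      simpa only [smul_pow, smul_comm (θ ^ _)] using
        NormedSpace.exp_series_hasSum_exp' (𝕂 := ℝ) (θ • a))
  simpa only [hterm, hflip] using htermwise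

namespace Matrix

theorem fromBlocks_zero_zero_pow_succ {m n α : Type*} [Fintype m] [DecidableEq m] [Fintype n]
    [DecidableEq n] [Semiring α] (A : Matrix m m α) (B : Matrix m n α) (k : ℕ) :
    fromBlocks A B 0 (0 : Matrix n n α) ^ (k + 1) = fromBlocks (A ^ (k + 1)) (A ^ k * B) 0 0 := by
  induction k with
  | zero => simp
  | succ k ih => rw [pow_succ, ih, fromBlocks_multiply]; simp [pow_succ, Matrix.mul_assoc]

theorem exp_fromBlocks_zero_zero {m n : Type*} [Fintype m] [DecidableEq m] [Fintype n]
    [DecidableEq n] (A : Matrix m m ℝ) (B : Matrix m n ℝ) :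
    NormedSpace.exp (fromBlocks A B 0 (0 : Matrix n n ℝ)) =
      fromBlocks (NormedSpace.exp A) ((∫ θ in (0:ℝ)..1, NormedSpace.exp ((1 - θ) • A)) * B) 0 1 := by
  set Φ := ∫ θ in (0:ℝ)..1, NormedSpace.exp ((1 - θ) • A)
  have hexp : HasSum (fun k => ((k + 1)! : ℝ)⁻¹ • A ^ (k + 1)) (NormedSpace.exp A - 1) := by
    have h := (hasSum_nat_add_iff' 1).2 (NormedSpace.exp_series_hasSum_exp' (𝕂 := ℝ) A)
    simp only [Finset.range_one, Finset.sum_singleton, factorial_zero, cast_one, inv_one,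
      pow_zero, one_smul] at h
    exact h
  have hblocks := hexp.matrix_fromBlocks ((hasSum_integral_exp_one_sub_smul A).matrix_mul_right B)
    (hasSum_zero (α := Matrix n m ℝ)) (hasSum_zero (α := Matrix n n ℝ))
  have hterms : (fun k => ((k + 1)! : ℝ)⁻¹ • fromBlocks A B 0 (0 : Matrix n n ℝ) ^ (k + 1)) =
      fun k => fromBlocks (((k + 1)! : ℝ)⁻¹ • A ^ (k + 1)) (((k + 1)! : ℝ)⁻¹ • A ^ k * B) 0 0 := by
    ext1 k
    simp only [fromBlocks_zero_zero_pow_succ, fromBlocks_smul, smul_zero, smul_mul]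
  have hvalue : fromBlocks (NormedSpace.exp A) (Φ * B) 0 (1 : Matrix n n ℝ) - 1 =
      fromBlocks (NormedSpace.exp A - 1) (Φ * B) 0 0 := by
    rw [sub_eq_iff_eq_add, ← fromBlocks_one, fromBlocks_add]
    simp
  refine (NormedSpace.exp_series_hasSum_exp' (𝕂 := ℝ) _).unique ((hasSum_nat_add_iff' 1).1 ?_)
  rw [Finset.range_one, Finset.sum_singleton, pow_zero, factorial_zero, cast_one, inv_one,
    one_smul, hvalue, hterms]
  exact hblocks

end Matrix

theorem augmented_exp_formula_general {n : ℕ} (X : Matrix (Fin n) (Fin n) ℝ)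
    (w v : Fin n → ℝ) (τ : ℝ) :
    let Xt : Matrix (Fin n ⊕ Fin 1) (Fin n ⊕ Fin 1) ℝ :=
      Matrix.fromBlocks X (Matrix.of fun i _ => w i) 0 0
    let vt : (Fin n ⊕ Fin 1) → ℝ := Sum.elim v (fun _ => 1)
    ∀ i : Fin n,
      (NormedSpace.exp (τ • Xt)).mulVec vt (Sum.inl i) =
        ((NormedSpace.exp (τ • X)).mulVec v + τ • (phi1R (τ • X)).mulVec w) i := by
  intro Xt vt i
  have hXt : τ • Xt = fromBlocks (τ • X) (replicateCol (Fin 1) (τ • w)) 0 0 := by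
    simp only [Xt, fromBlocks_smul, smul_zero]
    rfl
  have hcol : replicateCol (Fin 1) (τ • w) *ᵥ (vt ∘ Sum.inr) = τ • w := by
    ext j
    simp [vt, mulVec, dotProduct]
  rw [hXt, exp_fromBlocks_zero_zero, fromBlocks_mulVec, Sum.elim_inl, ← mulVec_mulVec, hcol,
    mulVec_smul]
  rfl

/-- Saad 1992, Proposition 2.1: augmented-matrix formula for
`e^{τX} v + τ φ₁(τX) w`. -/
theorem augmented_exp_formula {n : ℕ} (X : Matrix (Fin n) (Fin n) ℝ)
    (w v : Fin n → ℝ) (τ : ℝ) (hτ : 0 < τ) :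
    let Xt : Matrix (Fin n ⊕ Fin 1) (Fin n ⊕ Fin 1) ℝ :=
      Matrix.fromBlocks X (Matrix.of fun i _ => w i) 0 0
    let vt : (Fin n ⊕ Fin 1) → ℝ := Sum.elim v (fun _ => 1)
    ∀ i : Fin n,
      (NormedSpace.exp (τ • Xt)).mulVec vt (Sum.inl i) =
        ((NormedSpace.exp (τ • X)).mulVec v + τ • (phi1R (τ • X)).mulVec w) i :=
  augmented_exp_formula_general X w v τ
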